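/- Under the hypotheses of the previous statement (closed-loop Euler–Lagrange dynamics M(t)q″(t) + C(t)q′(t) = −K_P(q(t) − v) − K_D q′(t), M(t) symmetric with M′(t) = C(t) + C(t)ᵀ, K_P symmetric), assume additionally that K_D is positive semidefinite, i.e., wᵀ K_D w ≥ 0 for all w ∈ (Fin n → ℝ). Then the total energy V(t) = ½ q′(t)ᵀ M(t) q′(t) + ½ (q(t) − v)ᵀ K_P (q(t) − v) is nonincreasing: V(t) ≤ V(s) whenever s ≤ t. In particular V(t) ≤ V(0) for all t ≥ 0, so the total energy available to the prestabilized robot never exceeds its initial value for a constant reference. -/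

import Mathlib

/-!
Along the closed loop, `d/dt V = -q̇ᵀ K_D q̇ ≤ 0`: differentiating `½ q̇ᵀ M q̇` gives
`q̇ᵀ M q̈ + ½ q̇ᵀ Ṁ q̇ = q̇ᵀ (M q̈ + C q̇)` by `Ṁ = C + Cᵀ`, and substituting the dynamics
cancels the potential term `q̇ᵀ K_P (q - v)`. A function with nonpositive derivative is antitone.
-/

open Matrix

section Calculus

variable {𝕜 ι : Type*} [NontriviallyNormedField 𝕜] [Fintype ι] {t : 𝕜}

theorem HasDerivAt.dotProduct {u w : 𝕜 → ι → 𝕜} {u' w' : ι → 𝕜}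
    (hu : HasDerivAt u u' t) (hw : HasDerivAt w w' t) :
    HasDerivAt (fun s => u s ⬝ᵥ w s) (u' ⬝ᵥ w t + u t ⬝ᵥ w') t :=
  (HasDerivAt.fun_sum fun i _ => (hasDerivAt_pi.mp hu i).mul (hasDerivAt_pi.mp hw i)).congr_deriv
    (by simp only [_root_.dotProduct, Finset.sum_add_distrib])

theorem HasDerivAt.mulVec {A : 𝕜 → Matrix ι ι 𝕜} {A' : Matrix ι ι 𝕜} {w : 𝕜 → ι → 𝕜}
    {w' : ι → 𝕜} (hA : ∀ i j, HasDerivAt (fun s => A s i j) (A' i j) t)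
    (hw : HasDerivAt w w' t) :
    HasDerivAt (fun s => A s *ᵥ w s) (A' *ᵥ w t + A t *ᵥ w') t :=
  hasDerivAt_pi.mpr fun i => (hasDerivAt_pi.mpr (hA i)).dotProduct hw

theorem HasDerivAt.const_mulVec {w : 𝕜 → ι → 𝕜} {w' : ι → 𝕜} (hw : HasDerivAt w w' t)
    (A : Matrix ι ι 𝕜) : HasDerivAt (fun s => A *ᵥ w s) (A *ᵥ w') t := by
  simpa using
    HasDerivAt.mulVec (A := fun _ => A) (A' := 0) (fun i j => hasDerivAt_const t (A i j)) hw

end Calculus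

section QuadraticForms

variable {R ι : Type*} [CommRing R] [Fintype ι]

theorem Matrix.IsSymm.dotProduct_mulVec_comm {A : Matrix ι ι R} (hA : A.IsSymm) (u w : ι → R) :
    u ⬝ᵥ A *ᵥ w = w ⬝ᵥ A *ᵥ u := by
  rw [dotProduct_mulVec, dotProduct_comm, ← mulVec_transpose, hA.eq]

theorem dotProduct_add_transpose_mulVec_self (C : Matrix ι ι R) (u : ι → R) :
    u ⬝ᵥ (C + Cᵀ) *ᵥ u = 2 * (u ⬝ᵥ C *ᵥ u) := by
  rw [add_mulVec, dotProduct_add, mulVec_transpose, dotProduct_comm u (u ᵥ* C),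
    ← dotProduct_mulVec, two_mul]

/-- The left side is the product-rule derivative of `yᵀ M y + xᵀ K_P x` with `Ṁ = C + Cᵀ`,
at position error `x`, velocity `y` and acceleration `z`. -/
theorem closedLoop_energy_rate {M C K_P K_D : Matrix ι ι R} (hM : M.IsSymm) (hKP : K_P.IsSymm)
    {x y z : ι → R} (hdyn : M *ᵥ z + C *ᵥ y = -(K_P *ᵥ x) - K_D *ᵥ y) :
    (z ⬝ᵥ M *ᵥ y + y ⬝ᵥ ((C + Cᵀ) *ᵥ y + M *ᵥ z)) + (y ⬝ᵥ K_P *ᵥ x + x ⬝ᵥ K_P *ᵥ y)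
      = -(2 * (y ⬝ᵥ K_D *ᵥ y)) := by
  have hpower := congrArg (y ⬝ᵥ ·) hdyn
  simp only [dotProduct_add, dotProduct_sub, dotProduct_neg] at hpower
  rw [dotProduct_add, hM.dotProduct_mulVec_comm z y, dotProduct_add_transpose_mulVec_self,
    hKP.dotProduct_mulVec_comm x y]
  linear_combination 2 * hpower

end QuadraticForms

/-- With `K_D` positive semidefinite, the total energy
`V(t) = ½ q̇ᵀ M q̇ + ½ (q − v)ᵀ K_P (q − v)` of the prestabilized closed-loop
system is nonincreasing; in particular `V(t) ≤ V(0)` for all `t ≥ 0`. -/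
theorem energy_nonincreasing {n : ℕ}
    (q q' q'' : ℝ → (Fin n → ℝ)) (v : Fin n → ℝ)
    (M M' C : ℝ → Matrix (Fin n) (Fin n) ℝ)
    (K_P K_D : Matrix (Fin n) (Fin n) ℝ)
    (hq : ∀ t, HasDerivAt q (q' t) t)
    (hq' : ∀ t, HasDerivAt q' (q'' t) t)
    (hMsymm : ∀ t, (M t).IsSymm)
    (hKPsymm : K_P.IsSymm)
    (hM : ∀ t, ∀ i j, HasDerivAt (fun s => M s i j) (M' t i j) t)
    (hMdot : ∀ t, M' t = C t + (C t)ᵀ)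
    (hdyn : ∀ t, (M t) *ᵥ (q'' t) + (C t) *ᵥ (q' t) =
      -(K_P *ᵥ (q t - v)) - K_D *ᵥ (q' t))
    (hKD : ∀ w : Fin n → ℝ, 0 ≤ w ⬝ᵥ K_D *ᵥ w)
    (V : ℝ → ℝ)
    (hV : ∀ t, V t = (1/2) * (q' t ⬝ᵥ (M t) *ᵥ (q' t))
      + (1/2) * ((q t - v) ⬝ᵥ K_P *ᵥ (q t - v))) :
    (∀ s t : ℝ, s ≤ t → V t ≤ V s) ∧ (∀ t : ℝ, 0 ≤ t → V t ≤ V 0) := by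
  have hderiv : ∀ t, HasDerivAt V (-(q' t ⬝ᵥ K_D *ᵥ q' t)) t := by
    intro t
    have hkinetic := (hq' t).dotProduct (HasDerivAt.mulVec (hM t) (hq' t))
    have hpotential := ((hq t).sub_const v).dotProduct (((hq t).sub_const v).const_mulVec K_P)
    have hrate := closedLoop_energy_rate (hMsymm t) hKPsymm (hdyn t)
    rw [← hMdot t] at hrate
    rw [funext hV]
    exact ((hkinetic.const_mul _).add (hpotential.const_mul _)).congr_deriv (by linarith)
  have hanti : Antitone V :=
    antitone_of_hasDerivAt_nonpos hderiv fun t => neg_nonpos.mpr (hKD (q' t))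
  exact ⟨fun s t hst => hanti hst, fun t ht => hanti ht⟩
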